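/- arXiv:2505.03404 — 5 statements merged into one kernel-verified Lean document; each statement's English description precedes it below -/
import Mathlib

section
/- Let V be a vector space with nondegenerate symmetric bilinear form B, δ : V → V with δ² = 0 and B(ω,δη) = B(δω,η) for all ω,η, L = im(δ), and C a complement of L (V = L ⊕ C). If C is isotropic with respect to B, then the restriction δ|_C : C → L is bijective. -/
/-!
Since `δ` is symmetric, `ker δ` is orthogonal to `im δ`; an isotropic `C` is orthogonal to itself.
So a vector of `C ∩ ker δ` is orthogonal to `im δ + C = V`, hence zero by nondegeneracy: `δ|_C` is
injective. Since `δ² = 0`, `δ` kills `im δ`, so `im δ = δ(im δ + C) = δ(C)`: `δ|_C` is onto `im δ`.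
-/

open Submodule LinearMap

section

variable {R M : Type*} [CommRing R] [AddCommGroup M] [Module R M]

theorem eq_zero_of_forall_apply_eq_zero_of_sup_eq_top (B : M →ₗ[R] M →ₗ[R] R)
    (hB : ∀ x : M, (∀ y : M, B x y = 0) → x = 0) {P Q : Submodule R M} (hPQ : P ⊔ Q = ⊤)
    {x : M} (hP : ∀ y ∈ P, B x y = 0) (hQ : ∀ y ∈ Q, B x y = 0) : x = 0 := by
  have hle : P ⊔ Q ≤ ker (B x) := sup_le hP hQ
  rw [hPQ, top_le_iff, ker_eq_top] at hle
  exact hB x fun y => by rw [hle, LinearMap.zero_apply]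

theorem disjoint_ker_of_isotropic_of_sup_range_eq_top (B : M →ₗ[R] M →ₗ[R] R)
    (hB : ∀ x : M, (∀ y : M, B x y = 0) → x = 0) (δ : M →ₗ[R] M)
    (hsymm : ∀ ω η : M, B ω (δ η) = B (δ ω) η) {C : Submodule R M}
    (hsup : range δ ⊔ C = ⊤) (hiso : ∀ ω ∈ C, ∀ η ∈ C, B ω η = 0) :
    Disjoint C (ker δ) := by
  refine disjoint_ker.mpr fun c hc hδc => ?_
  refine eq_zero_of_forall_apply_eq_zero_of_sup_eq_top B hB hsup ?_ (hiso c hc)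
  rintro _ ⟨u, rfl⟩
  rw [hsymm, hδc, map_zero, LinearMap.zero_apply]

theorem map_eq_range_of_sup_range_eq_top {δ : M →ₗ[R] M} (hδ2 : δ ∘ₗ δ = 0)
    {C : Submodule R M} (hsup : range δ ⊔ C = ⊤) : C.map δ = range δ := by
  calc C.map δ = (range δ).map δ ⊔ C.map δ := by
        rw [← range_comp, hδ2, range_zero, bot_sup_eq]
    _ = range δ := by rw [← Submodule.map_sup, hsup, Submodule.map_top]

end

/-- If `C` is an isotropic complement of `L = im δ` for a symmetric square-zero `δ`
with respect to a nondegenerate bilinear form, then `δ|_C : C → L` is bijective. -/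
theorem bijective_restrict_of_isotropic_compl
    {V : Type*} [AddCommGroup V] [Module ℂ V]
    (B : V →ₗ[ℂ] V →ₗ[ℂ] ℂ)
    (hB : ∀ x : V, (∀ y : V, B x y = 0) → x = 0)
    (δ : V →ₗ[ℂ] V)
    (hδ2 : δ ∘ₗ δ = 0)
    (hsymm : ∀ ω η : V, B ω (δ η) = B (δ ω) η)
    (C : Submodule ℂ V)
    (hcompl : IsCompl (LinearMap.range δ) C)
    (hiso : ∀ ω ∈ C, ∀ η ∈ C, B ω η = 0) :
    Function.Bijective
      (fun c : C => (⟨δ c, LinearMap.mem_range.mpr ⟨c, rfl⟩⟩ : LinearMap.range δ)) := by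
  have hinj : Set.InjOn δ C := disjoint_ker_iff_injOn.mp <|
    disjoint_ker_of_isotropic_of_sup_range_eq_top B hB δ hsymm hcompl.sup_eq_top hiso
  have hmap : C.map δ = range δ := map_eq_range_of_sup_range_eq_top hδ2 hcompl.sup_eq_top
  refine ⟨fun c₁ c₂ h => Subtype.ext <| hinj c₁.2 c₂.2 (congrArg Subtype.val h), ?_⟩
  rintro ⟨y, hy⟩
  obtain ⟨c, hc, rfl⟩ := mem_map.mp (hmap ▸ hy)
  exact ⟨⟨c, hc⟩, rfl⟩
end

section
/- Let V = ⊕_{k=0}^n V^k be a finite-dimensional graded vector space, d : V^k → V^{k+1} with d² = 0, δ : V^k → V^{k−1} with δ² = 0, D = δd + dδ, and suppose ker(δ) = im(δ) (acyclicity) and V = im(δ) ⊕ C for a D-invariant complement C. Then for each k, tr(e^{−tD} restricted to im(δ) ∩ V^k) = tr(e^{−tD} restricted to C ∩ V^{k+1}). -/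
/-!
Applying `δ` maps `C ∩ V^{k+1}` isomorphically onto `im δ ∩ V^k`: it is injective because `C`
meets `ker δ = im δ` trivially, and surjective because `V^{k+1} = im δ + C` and `δ² = 0`.
Since `δ` commutes with `D`, this isomorphism conjugates the restriction of `D` to `C ∩ V^{k+1}`
into its restriction to `im δ ∩ V^k`, hence also the two heat operators, and conjugate operators
have the same trace.
-/

open NormedSpace

theorem ContinuousAlgEquiv.map_exp {𝕜 A B : Type*} [Field 𝕜] [CharZero 𝕜]
    [Ring A] [Algebra 𝕜 A] [TopologicalSpace A] [IsTopologicalRing A] [T2Space A]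
    [Ring B] [Algebra 𝕜 B] [TopologicalSpace B] [IsTopologicalRing B] [T2Space B]
    (f : A ≃A[𝕜] B) (x : A) : f (exp x) = exp (f x) := by
  simp only [exp_eq_tsum 𝕜, ← map_pow, ← map_smul]
  exact f.toContinuousLinearEquiv.map_tsum

theorem trace_exp_eq_of_semiconj {𝕜 P Q : Type*} [NontriviallyNormedField 𝕜] [CharZero 𝕜]
    [NormedAddCommGroup P] [NormedSpace 𝕜 P] [NormedAddCommGroup Q] [NormedSpace 𝕜 Q]
    (e : P ≃L[𝕜] Q) {A : P →L[𝕜] P} {B : Q →L[𝕜] Q} (h : Function.Semiconj e A B) :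
    LinearMap.trace 𝕜 Q (exp B).toLinearMap = LinearMap.trace 𝕜 P (exp A).toLinearMap := by
  have hB : B = e.conjContinuousAlgEquiv A := by
    ext y
    simp [h.eq]
  rw [hB, ← ContinuousAlgEquiv.map_exp, ← LinearMap.trace_conj' _ e.toLinearEquiv]
  rfl

theorem LinearMap.exists_linearEquiv_of_isCompl_ker {R M N P Q : Type*} [Ring R]
    [AddCommGroup M] [Module R M] [AddCommGroup N] [Module R N]
    [AddCommGroup P] [Module R P] [AddCommGroup Q] [Module R Q]
    (f : M →ₗ[R] N) {i : P →ₗ[R] M} (hi : Function.Injective i)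
    (hcompl : IsCompl (LinearMap.ker f) (LinearMap.range i))
    {j : Q →ₗ[R] N} (hj : Function.Injective j) (hrange : LinearMap.range j = LinearMap.range f) :
    ∃ e : P ≃ₗ[R] Q, ∀ p, j (e p) = f (i p) := by
  refine ⟨LinearEquiv.ofInjective i hi ≪≫ₗ (Submodule.quotientEquivOfIsCompl _ _ hcompl).symm ≪≫ₗ
    f.quotKerEquivRange ≪≫ₗ LinearEquiv.ofEq _ _ hrange.symm ≪≫ₗ
    (LinearEquiv.ofInjective j hj).symm, fun p => ?_⟩
  simp [LinearEquiv.ofInjective_symm_apply]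

theorem δ_comp_D_succ {𝕜 : Type*} [NontriviallyNormedField 𝕜] {V : ℕ → Type*}
    [∀ k, NormedAddCommGroup (V k)] [∀ k, NormedSpace 𝕜 (V k)]
    {d : ∀ k, V k →L[𝕜] V (k + 1)} {δ : ∀ k, V (k + 1) →L[𝕜] V k} {D : ∀ k, V k →L[𝕜] V k}
    (hδ2 : ∀ k, (δ k).comp (δ (k + 1)) = 0) (hD0 : D 0 = (δ 0).comp (d 0))
    (hDsucc : ∀ k, D (k + 1) = (δ (k + 1)).comp (d (k + 1)) + (d k).comp (δ k)) (k : ℕ) :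
    (δ k).comp (D (k + 1)) = (D k).comp (δ k) := by
  cases k with
  | zero =>
    rw [hDsucc, hD0, ContinuousLinearMap.comp_add, ← ContinuousLinearMap.comp_assoc, hδ2]
    simp [ContinuousLinearMap.comp_assoc]
  | succ m =>
    rw [hDsucc, hDsucc, ContinuousLinearMap.comp_add, ContinuousLinearMap.add_comp,
      ← ContinuousLinearMap.comp_assoc, hδ2, ContinuousLinearMap.comp_assoc (d m), hδ2]
    simp [ContinuousLinearMap.comp_assoc]

theorem restricted_heat_trace_shift_general
    (V : ℕ → Type) [∀ k, NormedAddCommGroup (V k)] [∀ k, NormedSpace ℂ (V k)]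
    (d : ∀ k, V k →L[ℂ] V (k + 1)) (δ : ∀ k, V (k + 1) →L[ℂ] V k)
    (hδ2 : ∀ k, (δ k).comp (δ (k + 1)) = 0)
    (D : ∀ k, V k →L[ℂ] V k)
    (hD0 : D 0 = (δ 0).comp (d 0))
    (hDsucc : ∀ k, D (k + 1) = (δ (k + 1)).comp (d (k + 1)) + (d k).comp (δ k))
    -- acyclicity of the `δ`-complex: `ker δ = im δ`
    (hacyc : ∀ k, LinearMap.ker (δ k : V (k + 1) →ₗ[ℂ] V k) = LinearMap.range (δ (k + 1) : V (k + 1 + 1) →ₗ[ℂ] V (k + 1)))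
    -- `L k` is the subspace `im(δ) ∩ V^k`, embedded in `V k`
    (L : ℕ → Type) [∀ k, NormedAddCommGroup (L k)] [∀ k, NormedSpace ℂ (L k)]
    (ιL : ∀ k, L k →L[ℂ] V k)
    (hιLinj : ∀ k, Function.Injective (ιL k))
    (hιLrange : ∀ k, LinearMap.range (ιL k : L k →ₗ[ℂ] V k) = LinearMap.range (δ k : V (k + 1) →ₗ[ℂ] V k))
    -- `C k` is a complement of `im(δ) ∩ V^k` in `V^k`, invariant under `D`
    (C : ℕ → Type) [∀ k, NormedAddCommGroup (C k)] [∀ k, NormedSpace ℂ (C k)]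
    [∀ k, FiniteDimensional ℂ (C k)]
    (ιC : ∀ k, C k →L[ℂ] V k)
    (hιCinj : ∀ k, Function.Injective (ιC k))
    (hcompl : ∀ k, IsCompl (LinearMap.range (δ k : V (k + 1) →ₗ[ℂ] V k)) (LinearMap.range (ιC k : C k →ₗ[ℂ] V k)))
    -- `DL`, `DC` are the restrictions of `D` to the two subspaces
    (DL : ∀ k, L k →L[ℂ] L k)
    (hDL : ∀ k, (ιL k).comp (DL k) = (D k).comp (ιL k))
    (DC : ∀ k, C k →L[ℂ] C k)
    (hDC : ∀ k, (ιC k).comp (DC k) = (D k).comp (ιC k))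
    (t : ℝ) (k : ℕ) :
    LinearMap.trace ℂ (L k) (exp ((-(t : ℂ)) • DL k)).toLinearMap
      = LinearMap.trace ℂ (C (k + 1)) (exp ((-(t : ℂ)) • DC (k + 1))).toLinearMap := by
  obtain ⟨e, he⟩ := LinearMap.exists_linearEquiv_of_isCompl_ker (δ k : V (k + 1) →ₗ[ℂ] V k)
    (hιCinj (k + 1)) (hacyc k ▸ hcompl (k + 1)) (hιLinj k) (hιLrange k)
  replace he : ∀ c, ιL k (e c) = δ k (ιC (k + 1) c) := he
  have hsemiconj : Function.Semiconj e (DC (k + 1)) (DL k) := fun c => hιLinj k <| by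
    calc ιL k (e (DC (k + 1) c)) = δ k (D (k + 1) (ιC (k + 1) c)) := by
          rw [he]; exact congrArg (δ k) congr($(hDC (k + 1)) c)
      _ = D k (ιL k (e c)) := by rw [he]; exact congr($(δ_comp_D_succ hδ2 hD0 hDsucc k) _)
      _ = ιL k (DL k (e c)) := congr($(hDL k) (e c)).symm
  refine trace_exp_eq_of_semiconj e.toContinuousLinearEquiv fun c => ?_
  simp only [smul_apply, LinearEquiv.coe_toContinuousLinearEquiv', map_smul, hsemiconj.eq]

/-- For a finite-dimensional graded vector space `V = ⊕_{k=0}^n V^k` (encoded as a family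
of spaces `V k`, trivial for `k > n`) with `d` of degree `+1`, `δ` of degree `−1`,
`d² = δ² = 0`, `D = [δ, d] = δd + dδ`, an acyclic `δ`-complex (`ker δ = im δ`) and a
`D`-invariant complement `C` of `im δ` (so `V^k = (im δ ∩ V^k) ⊕ C^k`), the traces of the
heat operator restricted to `im(δ) ∩ V^k` and to `C ∩ V^{k+1}` agree:
`tr(e^{−tD}|_{im(δ)∩V^k}) = tr(e^{−tD}|_{C∩V^{k+1}})`.  The subspaces `im(δ) ∩ V^k` and
`C^k` are presented as spaces `L k`, `C k` together with injective embeddings into `V k`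
with the correct ranges, and the restricted operators `DL k`, `DC k` are the restrictions
of `D`, i.e. they intertwine the embeddings with `D`. -/
theorem restricted_heat_trace_shift
    (V : ℕ → Type) [∀ k, NormedAddCommGroup (V k)] [∀ k, NormedSpace ℂ (V k)]
    [∀ k, FiniteDimensional ℂ (V k)]
    (n : ℕ) (hV : ∀ k, n < k → Subsingleton (V k))
    (d : ∀ k, V k →L[ℂ] V (k + 1)) (δ : ∀ k, V (k + 1) →L[ℂ] V k)
    (hd2 : ∀ k, (d (k + 1)).comp (d k) = 0)
    (hδ2 : ∀ k, (δ k).comp (δ (k + 1)) = 0)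
    (D : ∀ k, V k →L[ℂ] V k)
    (hD0 : D 0 = (δ 0).comp (d 0))
    (hDsucc : ∀ k, D (k + 1) = (δ (k + 1)).comp (d (k + 1)) + (d k).comp (δ k))
    -- acyclicity of the `δ`-complex: `ker δ = im δ`
    (hacyc : ∀ k, LinearMap.ker (δ k : V (k + 1) →ₗ[ℂ] V k) = LinearMap.range (δ (k + 1) : V (k + 1 + 1) →ₗ[ℂ] V (k + 1)))
    (hsurj : LinearMap.range (δ 0 : V (0 + 1) →ₗ[ℂ] V 0) = ⊤)
    -- `L k` is the subspace `im(δ) ∩ V^k`, embedded in `V k`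
    (L : ℕ → Type) [∀ k, NormedAddCommGroup (L k)] [∀ k, NormedSpace ℂ (L k)]
    [∀ k, FiniteDimensional ℂ (L k)]
    (ιL : ∀ k, L k →L[ℂ] V k)
    (hιLinj : ∀ k, Function.Injective (ιL k))
    (hιLrange : ∀ k, LinearMap.range (ιL k : L k →ₗ[ℂ] V k) = LinearMap.range (δ k : V (k + 1) →ₗ[ℂ] V k))
    -- `C k` is a complement of `im(δ) ∩ V^k` in `V^k`, invariant under `D`
    (C : ℕ → Type) [∀ k, NormedAddCommGroup (C k)] [∀ k, NormedSpace ℂ (C k)]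
    [∀ k, FiniteDimensional ℂ (C k)]
    (ιC : ∀ k, C k →L[ℂ] V k)
    (hιCinj : ∀ k, Function.Injective (ιC k))
    (hcompl : ∀ k, IsCompl (LinearMap.range (δ k : V (k + 1) →ₗ[ℂ] V k)) (LinearMap.range (ιC k : C k →ₗ[ℂ] V k)))
    -- `DL`, `DC` are the restrictions of `D` to the two subspaces
    (DL : ∀ k, L k →L[ℂ] L k)
    (hDL : ∀ k, (ιL k).comp (DL k) = (D k).comp (ιL k))
    (DC : ∀ k, C k →L[ℂ] C k)
    (hDC : ∀ k, (ιC k).comp (DC k) = (D k).comp (ιC k))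
    (t : ℝ) (k : ℕ) :
    LinearMap.trace ℂ (L k) (exp ((-(t : ℂ)) • DL k)).toLinearMap
      = LinearMap.trace ℂ (C (k + 1)) (exp ((-(t : ℂ)) • DC (k + 1))).toLinearMap :=
  restricted_heat_trace_shift_general V d δ hδ2 D hD0 hDsucc hacyc L ιL hιLinj hιLrange C ιC hιCinj
    hcompl DL hDL DC hDC t k
end

section
/- Under the hypotheses of the previous setup (finite-dimensional graded V, d² = δ² = 0, D = [δ,d], ker δ = im δ, V = im(δ) ⊕ C with C graded and D-invariant), the restricted supertrace satisfies: Σ_{k=0}^n (−1)^k tr(e^{−tD}|_{im(δ)∩V^k}) = Σ_{k=0}^n (−1)^{k+1} k · tr(e^{−tD}|_{V^k}). -/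
/-!
Since `C^k` and `L^k = im δ ∩ V^k` are `D`-invariant and complementary, the heat trace splits as
`tr e^{-tD}|_{V^k} = ℓ_k + c_k` (traces on `L^k` and `C^k`). The relation `δ δ = 0` makes `δ`
commute with `D`, and acyclicity makes `δ : C^{k+1} → L^k` an isomorphism, so `c_{k+1} = ℓ_k`.
Hence `tr e^{-tD}|_{V^{k+1}} = ℓ_{k+1} + ℓ_k`, and since `ℓ_n = 0` (as `V^{n+1} = 0`) the
weighted alternating sum telescopes to `Σ (-1)^k ℓ_k`.
-/

open NormedSpace

namespace ContinuousLinearMap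

variable {𝕂 E F : Type*} [RCLike 𝕂] [NormedAddCommGroup E] [NormedSpace 𝕂 E] [CompleteSpace E]
  [NormedAddCommGroup F] [NormedSpace 𝕂 F] [CompleteSpace F]
  {ι : E →L[𝕂] F} {A : E →L[𝕂] E} {B : F →L[𝕂] F}

theorem comp_exp_eq_exp_comp (h : ι.comp A = B.comp ι) : ι.comp (exp A) = (exp B).comp ι := by
  have hpow : ∀ m : ℕ, ι.comp (A ^ m) = (B ^ m).comp ι := by
    intro m
    induction m with
    | zero => rfl
    | succ m ih =>
      rw [pow_succ, pow_succ, mul_def, mul_def, ← comp_assoc, ih, comp_assoc, h, comp_assoc]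
  have hA := (exp_series_hasSum_exp' (𝕂 := 𝕂) A).mapL (compL 𝕂 E E F ι)
  have hB := (exp_series_hasSum_exp' (𝕂 := 𝕂) B).mapL ((compL 𝕂 E F F).flip ι)
  simp only [compL_apply, flip_apply, comp_smul, smul_comp, hpow] at hA hB
  exact hA.unique hB

theorem comp_exp_smul_eq_exp_smul_comp (c : 𝕂) (h : ι.comp A = B.comp ι) :
    ι.comp (exp (c • A)) = (exp (c • B)).comp ι :=
  comp_exp_eq_exp_comp (by rw [comp_smul, smul_comp, h])

end ContinuousLinearMap

namespace LinearMap

variable {R M N A B : Type*} [CommRing R] [AddCommGroup M] [Module R M] [AddCommGroup N]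
  [Module R N] [AddCommGroup A] [Module R A] [AddCommGroup B] [Module R B]

theorem injective_comp_of_disjoint_ker {f : M →ₗ[R] N} {ι : A →ₗ[R] M}
    (hι : Function.Injective ι) (hc : Disjoint (ker f) (range ι)) :
    Function.Injective (f ∘ₗ ι) := by
  rw [← ker_eq_bot, ker_comp, Submodule.eq_bot_iff]
  intro x hx
  apply hι
  rw [map_zero]
  exact Submodule.disjoint_def.1 hc _ hx ⟨x, rfl⟩

theorem range_comp_of_codisjoint_ker {f : M →ₗ[R] N} {ι : A →ₗ[R] M}
    (hc : Codisjoint (ker f) (range ι)) : range (f ∘ₗ ι) = range f := by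
  have hker : (ker f).map f = ⊥ := eq_bot_iff.2 (Submodule.map_le_iff_le_comap.2 le_rfl)
  calc range (f ∘ₗ ι) = (range ι).map f := range_comp ι f
    _ = (ker f ⊔ range ι).map f := by rw [Submodule.map_sup, hker, bot_sup_eq]
    _ = range f := by rw [hc.eq_top, range_eq_map]

theorem trace_eq_of_injective_of_range_eq {ιA : A →ₗ[R] M} {ιB : B →ₗ[R] M}
    (hA : Function.Injective ιA) (hB : Function.Injective ιB) (hAB : range ιA = range ιB)
    {T : M →ₗ[R] M} {SA : A →ₗ[R] A} {SB : B →ₗ[R] B}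
    (hSA : ιA ∘ₗ SA = T ∘ₗ ιA) (hSB : ιB ∘ₗ SB = T ∘ₗ ιB) :
    trace R A SA = trace R B SB := by
  let e : A ≃ₗ[R] B := (LinearEquiv.ofInjective ιA hA).trans
    ((LinearEquiv.ofEq _ _ hAB).trans (LinearEquiv.ofInjective ιB hB).symm)
  have he (x : A) : ιB (e x) = ιA x := by simp [e]
  have hconj : e.conj SA = SB := by
    ext y
    obtain ⟨x, rfl⟩ := e.surjective y
    apply hB
    rw [LinearEquiv.conj_apply_apply, LinearEquiv.symm_apply_apply, he, ← comp_apply ιB, hSB,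
      comp_apply, he, ← comp_apply, hSA, comp_apply]
  rw [← hconj, trace_conj']

theorem trace_eq_of_isCompl_ker {f : M →ₗ[R] N} {ιA : A →ₗ[R] M} {ιB : B →ₗ[R] N}
    (hA : Function.Injective ιA) (hB : Function.Injective ιB) (hc : IsCompl (ker f) (range ιA))
    (hfB : range ιB = range f) {T : M →ₗ[R] M} {T' : N →ₗ[R] N} {SA : A →ₗ[R] A}
    {SB : B →ₗ[R] B} (hf : f ∘ₗ T = T' ∘ₗ f) (hSA : ιA ∘ₗ SA = T ∘ₗ ιA)
    (hSB : ιB ∘ₗ SB = T' ∘ₗ ιB) :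
    trace R A SA = trace R B SB :=
  trace_eq_of_injective_of_range_eq (injective_comp_of_disjoint_ker hA hc.disjoint) hB
    ((range_comp_of_codisjoint_ker hc.codisjoint).trans hfB.symm)
    (by rw [comp_assoc, hSA, ← comp_assoc, hf, comp_assoc]) hSB

theorem trace_eq_add_of_isCompl [Module.Free R A] [Module.Finite R A] [Module.Free R B]
    [Module.Finite R B] {ιA : A →ₗ[R] M} {ιB : B →ₗ[R] M}
    (hA : Function.Injective ιA) (hB : Function.Injective ιB) (hc : IsCompl (range ιA) (range ιB))
    {T : M →ₗ[R] M} {SA : A →ₗ[R] A} {SB : B →ₗ[R] B}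
    (hSA : ιA ∘ₗ SA = T ∘ₗ ιA) (hSB : ιB ∘ₗ SB = T ∘ₗ ιB) :
    trace R M T = trace R A SA + trace R B SB := by
  rw [← trace_prodMap']
  refine (trace_eq_of_injective_of_range_eq (ιA := ιA.coprod ιB) (ιB := id) (T := T)
    (SB := T) ?_ Function.injective_id ?_ ?_ rfl).symm
  · rw [← ker_eq_bot, ker_coprod_of_disjoint_range _ _ hc.disjoint, ker_eq_bot.mpr hA,
      ker_eq_bot.mpr hB, Submodule.prod_bot]
  · rw [range_coprod, hc.sup_eq_top, range_id]
  · ext x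
    · simpa using congr($hSA x)
    · simpa using congr($hSB x)

end LinearMap

section GradedComplex

variable {R : Type*} [Semiring R] {V : ℕ → Type*} [∀ k, TopologicalSpace (V k)]
  [∀ k, AddCommMonoid (V k)] [∀ k, Module R (V k)] [∀ k, ContinuousAdd (V k)]
  {d : ∀ k, V k →L[R] V (k + 1)} {δ : ∀ k, V (k + 1) →L[R] V k} {D : ∀ k, V k →L[R] V k}

open ContinuousLinearMap in
theorem delta_comp_laplacian (hδ2 : ∀ k, (δ k).comp (δ (k + 1)) = 0)
    (hD0 : D 0 = (δ 0).comp (d 0))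
    (hDsucc : ∀ k, D (k + 1) = (δ (k + 1)).comp (d (k + 1)) + (d k).comp (δ k)) (k : ℕ) :
    (δ k).comp (D (k + 1)) = (D k).comp (δ k) := by
  rcases k with _ | k
  · rw [hDsucc, hD0, comp_add, ← comp_assoc, hδ2, zero_comp, comp_assoc]
    exact zero_add _
  · rw [hDsucc, hDsucc, comp_add, add_comp, ← comp_assoc, hδ2, zero_comp, zero_add,
      comp_assoc (d k), hδ2, comp_zero, add_zero, comp_assoc]

end GradedComplex

open Finset in
theorem sum_range_neg_one_pow_succ_mul_eq {R : Type*} [CommRing R] {a v : ℕ → R}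
    (hv : ∀ k, v (k + 1) = a (k + 1) + a k) (n : ℕ) :
    ∑ k ∈ range (n + 1), (-1) ^ (k + 1) * (k : R) * v k
      = ∑ k ∈ range n, (-1) ^ k * a k + (-1) ^ (n + 1) * n * a n := by
  induction n with
  | zero => simp
  | succ n ih =>
    rw [sum_range_succ, ih, hv, sum_range_succ]
    push_cast
    ring

theorem restricted_supertrace_formula_general
    (V : ℕ → Type) [∀ k, NormedAddCommGroup (V k)] [∀ k, NormedSpace ℂ (V k)]
    [∀ k, FiniteDimensional ℂ (V k)]
    (n : ℕ) (hV : ∀ k, n < k → Subsingleton (V k))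
    (d : ∀ k, V k →L[ℂ] V (k + 1)) (δ : ∀ k, V (k + 1) →L[ℂ] V k)
    (hδ2 : ∀ k, (δ k).comp (δ (k + 1)) = 0)
    (D : ∀ k, V k →L[ℂ] V k)
    (hD0 : D 0 = (δ 0).comp (d 0))
    (hDsucc : ∀ k, D (k + 1) = (δ (k + 1)).comp (d (k + 1)) + (d k).comp (δ k))
    -- acyclicity of the `δ`-complex: `ker δ = im δ`
    (hacyc : ∀ k, LinearMap.ker (δ k : V (k + 1) →ₗ[ℂ] V k) = LinearMap.range (δ (k + 1) : V (k + 1 + 1) →ₗ[ℂ] V (k + 1)))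
    -- `L k` is the subspace `im(δ) ∩ V^k`, embedded in `V k`
    (L : ℕ → Type) [∀ k, NormedAddCommGroup (L k)] [∀ k, NormedSpace ℂ (L k)]
    [∀ k, FiniteDimensional ℂ (L k)]
    (ιL : ∀ k, L k →L[ℂ] V k)
    (hιLinj : ∀ k, Function.Injective (ιL k))
    (hιLrange : ∀ k, LinearMap.range (ιL k : L k →ₗ[ℂ] V k) = LinearMap.range (δ k : V (k + 1) →ₗ[ℂ] V k))
    -- `C k` is a complement of `im(δ) ∩ V^k` in `V^k`, invariant under `D`
    (C : ℕ → Type) [∀ k, NormedAddCommGroup (C k)] [∀ k, NormedSpace ℂ (C k)]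
    [∀ k, FiniteDimensional ℂ (C k)]
    (ιC : ∀ k, C k →L[ℂ] V k)
    (hιCinj : ∀ k, Function.Injective (ιC k))
    (hcompl : ∀ k, IsCompl (LinearMap.range (δ k : V (k + 1) →ₗ[ℂ] V k)) (LinearMap.range (ιC k : C k →ₗ[ℂ] V k)))
    -- `DL`, `DC` are the restrictions of `D` to the two subspaces
    (DL : ∀ k, L k →L[ℂ] L k)
    (hDL : ∀ k, (ιL k).comp (DL k) = (D k).comp (ιL k))
    (DC : ∀ k, C k →L[ℂ] C k)
    (hDC : ∀ k, (ιC k).comp (DC k) = (D k).comp (ιC k))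
    (t : ℝ) :
    ∑ k ∈ Finset.range (n + 1),
        (-1 : ℂ) ^ k * LinearMap.trace ℂ (L k) (exp ((-(t : ℂ)) • DL k)).toLinearMap
      = ∑ k ∈ Finset.range (n + 1),
          (-1 : ℂ) ^ (k + 1) * (k : ℂ) *
            LinearMap.trace ℂ (V k) (exp ((-(t : ℂ)) • D k)).toLinearMap := by
  set ℓ := fun k => LinearMap.trace ℂ (L k) (exp ((-(t : ℂ)) • DL k)).toLinearMap
  set c := fun k => LinearMap.trace ℂ (C k) (exp ((-(t : ℂ)) • DC k)).toLinearMap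
  set v := fun k => LinearMap.trace ℂ (V k) (exp ((-(t : ℂ)) • D k)).toLinearMap
  change ∑ k ∈ Finset.range (n + 1), (-1 : ℂ) ^ k * ℓ k
    = ∑ k ∈ Finset.range (n + 1), (-1 : ℂ) ^ (k + 1) * (k : ℂ) * v k
  have hexpL k := congr(ContinuousLinearMap.toLinearMap
    $((ιL k).comp_exp_smul_eq_exp_smul_comp (-(t : ℂ)) (hDL k)))
  have hexpC k := congr(ContinuousLinearMap.toLinearMap
    $((ιC k).comp_exp_smul_eq_exp_smul_comp (-(t : ℂ)) (hDC k)))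
  have hexpδ k := congr(ContinuousLinearMap.toLinearMap
    $((δ k).comp_exp_smul_eq_exp_smul_comp (-(t : ℂ)) (delta_comp_laplacian hδ2 hD0 hDsucc k)))
  have hsplit (k : ℕ) : v k = ℓ k + c k :=
    LinearMap.trace_eq_add_of_isCompl (hιLinj k) (hιCinj k) (hιLrange k ▸ hcompl k)
      (hexpL k) (hexpC k)
  have hshift (k : ℕ) : c (k + 1) = ℓ k :=
    LinearMap.trace_eq_of_isCompl_ker (f := δ k) (hιCinj _) (hιLinj k) (hacyc k ▸ hcompl (k + 1))
      (hιLrange k) (hexpδ k) (hexpC (k + 1)) (hexpL k)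
  have hℓn : ℓ n = 0 := by
    have := hV (n + 1) n.lt_succ_self
    have := (hιCinj (n + 1)).subsingleton
    rw [← hshift n]
    exact (congrArg (LinearMap.trace ℂ (C (n + 1))) (Subsingleton.elim _ 0)).trans (map_zero _)
  rw [sum_range_neg_one_pow_succ_mul_eq (fun k => (hsplit (k + 1)).trans (by rw [hshift])),
    hℓn, mul_zero, add_zero, Finset.sum_range_succ, hℓn, mul_zero, add_zero]

/-- Restricted supertrace formula: under the hypotheses of the graded setup
(finite-dimensional graded `V`, `d² = δ² = 0`, `D = [δ,d]`, `ker δ = im δ`,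
`V = im(δ) ⊕ C` with `C` graded and `D`-invariant), the supertrace of the heat operator
restricted to `L = im δ` satisfies
`Σ_{k=0}^n (−1)^k tr(e^{−tD}|_{im(δ)∩V^k}) = Σ_{k=0}^n (−1)^{k+1} k · tr(e^{−tD}|_{V^k})`. -/
theorem restricted_supertrace_formula
    (V : ℕ → Type) [∀ k, NormedAddCommGroup (V k)] [∀ k, NormedSpace ℂ (V k)]
    [∀ k, FiniteDimensional ℂ (V k)]
    (n : ℕ) (hV : ∀ k, n < k → Subsingleton (V k))
    (d : ∀ k, V k →L[ℂ] V (k + 1)) (δ : ∀ k, V (k + 1) →L[ℂ] V k)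
    (hd2 : ∀ k, (d (k + 1)).comp (d k) = 0)
    (hδ2 : ∀ k, (δ k).comp (δ (k + 1)) = 0)
    (D : ∀ k, V k →L[ℂ] V k)
    (hD0 : D 0 = (δ 0).comp (d 0))
    (hDsucc : ∀ k, D (k + 1) = (δ (k + 1)).comp (d (k + 1)) + (d k).comp (δ k))
    -- acyclicity of the `δ`-complex: `ker δ = im δ`
    (hacyc : ∀ k, LinearMap.ker (δ k : V (k + 1) →ₗ[ℂ] V k) = LinearMap.range (δ (k + 1) : V (k + 1 + 1) →ₗ[ℂ] V (k + 1)))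
    (hsurj : LinearMap.range (δ 0 : V (0 + 1) →ₗ[ℂ] V 0) = ⊤)
    -- `L k` is the subspace `im(δ) ∩ V^k`, embedded in `V k`
    (L : ℕ → Type) [∀ k, NormedAddCommGroup (L k)] [∀ k, NormedSpace ℂ (L k)]
    [∀ k, FiniteDimensional ℂ (L k)]
    (ιL : ∀ k, L k →L[ℂ] V k)
    (hιLinj : ∀ k, Function.Injective (ιL k))
    (hιLrange : ∀ k, LinearMap.range (ιL k : L k →ₗ[ℂ] V k) = LinearMap.range (δ k : V (k + 1) →ₗ[ℂ] V k))
    -- `C k` is a complement of `im(δ) ∩ V^k` in `V^k`, invariant under `D`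
    (C : ℕ → Type) [∀ k, NormedAddCommGroup (C k)] [∀ k, NormedSpace ℂ (C k)]
    [∀ k, FiniteDimensional ℂ (C k)]
    (ιC : ∀ k, C k →L[ℂ] V k)
    (hιCinj : ∀ k, Function.Injective (ιC k))
    (hcompl : ∀ k, IsCompl (LinearMap.range (δ k : V (k + 1) →ₗ[ℂ] V k)) (LinearMap.range (ιC k : C k →ₗ[ℂ] V k)))
    -- `DL`, `DC` are the restrictions of `D` to the two subspaces
    (DL : ∀ k, L k →L[ℂ] L k)
    (hDL : ∀ k, (ιL k).comp (DL k) = (D k).comp (ιL k))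
    (DC : ∀ k, C k →L[ℂ] C k)
    (hDC : ∀ k, (ιC k).comp (DC k) = (D k).comp (ιC k))
    (t : ℝ) :
    ∑ k ∈ Finset.range (n + 1),
        (-1 : ℂ) ^ k * LinearMap.trace ℂ (L k) (exp ((-(t : ℂ)) • DL k)).toLinearMap
      = ∑ k ∈ Finset.range (n + 1),
          (-1 : ℂ) ^ (k + 1) * (k : ℂ) *
            LinearMap.trace ℂ (V k) (exp ((-(t : ℂ)) • D k)).toLinearMap :=
  restricted_supertrace_formula_general V n hV d δ hδ2 D hD0 hDsucc hacyc L ιL hιLinj hιLrange C ιC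
    hιCinj hcompl DL hDL DC hDC t
end

section
/- Let V = ⊕_k V^k be a finite-dimensional graded vector space, d of degree +1 with d² = 0, δ_τ of degree −1 with δ_τ² = 0 a differentiable family with d/dτ δ_τ = θ_τ δ_τ − δ_τ θ_τ for degree-preserving θ_τ, and D_τ = δ_τ d + d δ_τ. Then Σ_k (−1)^k k · tr((d/dτ D_τ^{(k)}) e^{−tD_τ^{(k)}}) = Σ_k (−1)^k tr(θ_τ^{(k)} (d/dt) e^{−tD_τ^{(k)}}), where the superscript (k) denotes restriction to V^k. -/
/-!
Write `E = e^{-tD}` and `δ' = θδ - δθ`. Since `d² = 0` and `δ² = 0`, `D` commutes with `d` and `δ`,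
hence so does `E`. Differentiating `D = δd + dδ` gives `D'^{(k)} = δ'd + dδ'`, and by cyclicity of
the trace together with `E d = d E`, the piece `dδ'E` in degree `k` has the same trace as `δ'dE` in
degree `k - 1`. So with `f_k = tr(δ' d E)^{(k)}` the degree-weighted supertrace is
`Σ (-1)^k k (f_k + f_{k-1}) = -Σ (-1)^k f_k`. Expanding `δ'` and moving `δ` around the trace once
more, `f_k = tr(θ δd E)^{(k)} - tr(θ dδ E)^{(k+1)}`, and the alternating sum of these terms is
`-Σ (-1)^k tr(θ D E)^{(k)} = Σ (-1)^k tr(θ (d/dt) E)^{(k)}`.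
-/

open NormedSpace

theorem exp_comp_eq_comp_exp_of_comp_eq {𝕜 E F : Type*} [RCLike 𝕜]
    [NormedAddCommGroup E] [NormedSpace 𝕜 E]
    [CompleteSpace E] [NormedAddCommGroup F] [NormedSpace 𝕜 F] [CompleteSpace F]
    (f : E →L[𝕜] F) {A : E →L[𝕜] E} {B : F →L[𝕜] F} (h : B ∘L f = f ∘L A) :
    exp B ∘L f = f ∘L exp A := by
  have hpow : ∀ m : ℕ, (B ^ m) ∘L f = f ∘L (A ^ m) := fun m => by
    ext x
    have hsemi : Function.Semiconj f A B := fun y => (DFunLike.congr_fun h y).symm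
    simpa [← ContinuousLinearMap.toLinearMap_pow] using (hsemi.iterate_right m x).symm
  have hB := (exp_series_hasSum_exp' (𝕂 := 𝕜) B).mapL ((ContinuousLinearMap.compL 𝕜 E F F).flip f)
  have hA := (exp_series_hasSum_exp' (𝕂 := 𝕜) A).mapL (ContinuousLinearMap.compL 𝕜 E E F f)
  refine hB.unique ?_
  simpa [hpow] using hA

theorem hasDerivAt_exp_neg_smul {𝔸 : Type*} [NormedRing 𝔸] [NormedAlgebra ℂ 𝔸] [CompleteSpace 𝔸]
    (A : 𝔸) (t : ℝ) :
    HasDerivAt (fun s : ℝ => exp (-(s : ℂ) • A)) (-(A * exp (-(t : ℂ) • A))) t := by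
  have hneg : HasDerivAt (fun s : ℝ => -(s : ℂ)) (-1) t := by
    simpa [Pi.neg_def] using Complex.ofRealCLM.hasDerivAt.neg
  simpa [Function.comp_def] using (hasDerivAt_exp_smul_const' A (-(t : ℂ))).scomp t hneg

theorem ContinuousLinearMap.trace_comp_comp_of_comp_eq {R M N : Type*} [CommRing R]
    [TopologicalSpace M] [AddCommGroup M] [Module R M] [Module.Free R M] [Module.Finite R M]
    [TopologicalSpace N] [AddCommGroup N] [Module R N] [Module.Free R N] [Module.Finite R N]
    (g : M →L[R] N) (X : N →L[R] M) {A : M →L[R] M} {B : N →L[R] N} (h : B ∘L g = g ∘L A) :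
    LinearMap.trace R N (g ∘L X ∘L B).toLinearMap
      = LinearMap.trace R M (X ∘L g ∘L A).toLinearMap := by
  have h' := congrArg toLinearMap h
  simp only [ContinuousLinearMap.toLinearMap_comp] at h' ⊢
  rw [← LinearMap.trace_comp_comm', LinearMap.comp_assoc, h']

theorem alternating_weighted_sum_eq_neg_alternating_sum {R : Type*} [CommRing R] (n : ℕ)
    {f L : ℕ → R} (hL : ∀ k, L (k + 1) = f (k + 1) + f k) (hf : f n = 0) :
    ∑ k ∈ Finset.range (n + 1), (-1 : R) ^ k * k * L k
      = -∑ k ∈ Finset.range (n + 1), (-1 : R) ^ k * f k := by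
  set G : ℕ → R := fun k => (-1) ^ k * k * f k
  have hstep : ∀ k, (-1 : R) ^ (k + 1) * ↑(k + 1) * L (k + 1)
      = G (k + 1) - G k - (-1) ^ k * f k := fun k => by
    simp only [G, hL]; push_cast; ring
  rw [Finset.sum_range_succ', Finset.sum_range_succ _ n, hf]
  simp only [hstep]
  rw [Finset.sum_sub_distrib, Finset.sum_range_sub]
  simp [G, hf]

theorem neg_alternating_sum_sub_eq {R : Type*} [CommRing R] (n : ℕ) {a c f r : ℕ → R}
    (hf : ∀ k, f k = a k - c k) (hr0 : r 0 = -a 0) (hr : ∀ k, r (k + 1) = -(a (k + 1) + c k))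
    (hc : c n = 0) :
    -∑ k ∈ Finset.range (n + 1), (-1 : R) ^ k * f k
      = ∑ k ∈ Finset.range (n + 1), (-1 : R) ^ k * r k := by
  have hc' : ∑ k ∈ Finset.range (n + 1), (-1 : R) ^ k * c k
      = ∑ k ∈ Finset.range n, (-1 : R) ^ k * c k := by
    rw [Finset.sum_range_succ, hc, mul_zero, add_zero]
  simp only [hf, mul_sub, Finset.sum_sub_distrib, hc']
  rw [Finset.sum_range_succ' _ n, Finset.sum_range_succ' (fun k => (-1 : R) ^ k * r k)]
  simp only [hr, hr0, pow_succ, mul_add, Finset.sum_add_distrib, mul_neg, neg_mul, mul_one,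
    Finset.sum_neg_distrib]
  ring

section GradedComplex

variable {V : ℕ → Type*} [∀ k, NormedAddCommGroup (V k)] [∀ k, NormedSpace ℂ (V k)]
  (d : ∀ k, V k →L[ℂ] V (k + 1))

def gradedLaplacian (δ : ∀ k, V (k + 1) →L[ℂ] V k) : ∀ k, V k →L[ℂ] V k
  | 0 => δ 0 ∘L d 0
  | k + 1 => δ (k + 1) ∘L d (k + 1) + d k ∘L δ k

theorem gradedLaplacian_comp_differential {δ : ∀ k, V (k + 1) →L[ℂ] V k}
    (hd2 : ∀ k, d (k + 1) ∘L d k = 0) (k : ℕ) :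
    gradedLaplacian d δ (k + 1) ∘L d k = d k ∘L gradedLaplacian d δ k := by
  ext x
  have hdd : ∀ j (y : V j), d (j + 1) (d j y) = 0 := fun j y => DFunLike.congr_fun (hd2 j) y
  cases k <;> simp [gradedLaplacian, hdd]

theorem gradedLaplacian_comp_codifferential {δ : ∀ k, V (k + 1) →L[ℂ] V k}
    (hδ2 : ∀ k, δ k ∘L δ (k + 1) = 0) (k : ℕ) :
    gradedLaplacian d δ k ∘L δ k = δ k ∘L gradedLaplacian d δ (k + 1) := by
  ext x
  have hδδ : ∀ j (y : V (j + 2)), δ j (δ (j + 1) y) = 0 := fun j y => DFunLike.congr_fun (hδ2 j) y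
  cases k <;> simp [gradedLaplacian, hδδ]

theorem hasDerivAt_gradedLaplacian_succ {δ : ℝ → ∀ k, V (k + 1) →L[ℂ] V k}
    {δ' : ∀ k, V (k + 1) →L[ℂ] V k} {τ : ℝ} (hδ' : ∀ k, HasDerivAt (fun s => δ s k) (δ' k) τ)
    (k : ℕ) :
    HasDerivAt (fun s => gradedLaplacian d (δ s) (k + 1))
      (δ' (k + 1) ∘L d (k + 1) + d k ∘L δ' k) τ := by
  -- `HasDerivAt.clm_comp` needs maps linear over the field of the variable, here `ℝ`, not `ℂ`.
  have hright := (((ContinuousLinearMap.compL ℂ _ _ _).flip (d (k + 1))).restrictScalars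
    ℝ).hasFDerivAt.comp_hasDerivAt τ (hδ' (k + 1))
  have hleft := ((ContinuousLinearMap.compL ℂ _ _ _ (d k)).restrictScalars
    ℝ).hasFDerivAt.comp_hasDerivAt τ (hδ' k)
  exact hright.add hleft

variable [∀ k, FiniteDimensional ℂ (V k)]

theorem exp_smul_gradedLaplacian_comp_differential {δ : ∀ k, V (k + 1) →L[ℂ] V k}
    (hd2 : ∀ k, d (k + 1) ∘L d k = 0) (c : ℂ) (k : ℕ) :
    exp (c • gradedLaplacian d δ (k + 1)) ∘L d k = d k ∘L exp (c • gradedLaplacian d δ k) :=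
  exp_comp_eq_comp_exp_of_comp_eq (𝕜 := ℂ) (d k) <| by
    rw [ContinuousLinearMap.smul_comp, ContinuousLinearMap.comp_smul,
      gradedLaplacian_comp_differential d hd2]

theorem exp_smul_gradedLaplacian_comp_codifferential {δ : ∀ k, V (k + 1) →L[ℂ] V k}
    (hδ2 : ∀ k, δ k ∘L δ (k + 1) = 0) (c : ℂ) (k : ℕ) :
    exp (c • gradedLaplacian d δ k) ∘L δ k = δ k ∘L exp (c • gradedLaplacian d δ (k + 1)) :=
  exp_comp_eq_comp_exp_of_comp_eq (𝕜 := ℂ) (δ k) <| by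
    rw [ContinuousLinearMap.smul_comp, ContinuousLinearMap.comp_smul,
      gradedLaplacian_comp_codifferential d hδ2]

theorem trace_comp_add_comp_exp_smul_gradedLaplacian {δ : ∀ k, V (k + 1) →L[ℂ] V k}
    (hd2 : ∀ k, d (k + 1) ∘L d k = 0) (c : ℂ) (X : ∀ k, V (k + 1) →L[ℂ] V k) (k : ℕ) :
    LinearMap.trace ℂ (V (k + 1))
        ((X (k + 1) ∘L d (k + 1) + d k ∘L X k) ∘L exp (c • gradedLaplacian d δ (k + 1))).toLinearMap
      = LinearMap.trace ℂ (V (k + 1))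
          (X (k + 1) ∘L d (k + 1) ∘L exp (c • gradedLaplacian d δ (k + 1))).toLinearMap
        + LinearMap.trace ℂ (V k) (X k ∘L d k ∘L exp (c • gradedLaplacian d δ k)).toLinearMap := by
  rw [ContinuousLinearMap.add_comp, ContinuousLinearMap.toLinearMap_add, map_add,
    ContinuousLinearMap.comp_assoc, ContinuousLinearMap.comp_assoc,
    (d k).trace_comp_comp_of_comp_eq (X k) (exp_smul_gradedLaplacian_comp_differential d hd2 c k)]

theorem trace_commutator_comp_differential_comp_exp_smul_gradedLaplacian
    {δ : ∀ k, V (k + 1) →L[ℂ] V k} (hδ2 : ∀ k, δ k ∘L δ (k + 1) = 0) (c : ℂ)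
    (θ : ∀ k, V k →L[ℂ] V k) (k : ℕ) :
    LinearMap.trace ℂ (V k)
        ((θ k ∘L δ k - δ k ∘L θ (k + 1)) ∘L d k ∘L exp (c • gradedLaplacian d δ k)).toLinearMap
      = LinearMap.trace ℂ (V k)
          (θ k ∘L δ k ∘L d k ∘L exp (c • gradedLaplacian d δ k)).toLinearMap
        - LinearMap.trace ℂ (V (k + 1))
          (θ (k + 1) ∘L d k ∘L δ k ∘L exp (c • gradedLaplacian d δ (k + 1))).toLinearMap := by
  rw [ContinuousLinearMap.sub_comp, ContinuousLinearMap.toLinearMap_sub, map_sub,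
    ContinuousLinearMap.comp_assoc, ContinuousLinearMap.comp_assoc,
    ← ContinuousLinearMap.comp_assoc (θ (k + 1)) (d k),
    (δ k).trace_comp_comp_of_comp_eq (θ (k + 1) ∘L d k)
      (exp_smul_gradedLaplacian_comp_codifferential d hδ2 c k)]
  simp only [ContinuousLinearMap.comp_assoc]

theorem trace_comp_deriv_exp_neg_smul {E : Type*} [NormedAddCommGroup E] [NormedSpace ℂ E]
    [FiniteDimensional ℂ E] (θ A : E →L[ℂ] E) (t : ℝ) :
    LinearMap.trace ℂ E (θ ∘L deriv (fun s : ℝ => exp (-(s : ℂ) • A)) t).toLinearMap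
      = -LinearMap.trace ℂ E (θ ∘L A ∘L exp (-(t : ℂ) • A)).toLinearMap := by
  rw [(hasDerivAt_exp_neg_smul A t).deriv, ContinuousLinearMap.mul_def,
    ContinuousLinearMap.comp_neg, ContinuousLinearMap.toLinearMap_neg, map_neg]

theorem trace_comp_deriv_exp_neg_smul_gradedLaplacian_succ (δ : ∀ k, V (k + 1) →L[ℂ] V k)
    (k : ℕ) (θ : V (k + 1) →L[ℂ] V (k + 1)) (t : ℝ) :
    LinearMap.trace ℂ (V (k + 1))
        (θ ∘L deriv (fun s : ℝ => exp (-(s : ℂ) • gradedLaplacian d δ (k + 1))) t).toLinearMap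
      = -(LinearMap.trace ℂ (V (k + 1)) (θ ∘L δ (k + 1) ∘L d (k + 1) ∘L
            exp (-(t : ℂ) • gradedLaplacian d δ (k + 1))).toLinearMap
          + LinearMap.trace ℂ (V (k + 1)) (θ ∘L d k ∘L δ k ∘L
            exp (-(t : ℂ) • gradedLaplacian d δ (k + 1))).toLinearMap) := by
  rw [trace_comp_deriv_exp_neg_smul, ← map_add, ← ContinuousLinearMap.toLinearMap_add,
    ← ContinuousLinearMap.comp_add, ← ContinuousLinearMap.comp_assoc (δ (k + 1)),
    ← ContinuousLinearMap.comp_assoc (d k), ← ContinuousLinearMap.add_comp]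
  rfl

end GradedComplex

set_option synthInstance.maxHeartbeats 400000 in
/-- For a differentiable family of degree `−1` codifferentials `δ_τ` with `δ_τ² = 0` and
`d/dτ δ_τ = [θ_τ, δ_τ]` (an inner variation with degree-preserving `θ_τ`), on a
finite-dimensional graded space with `d` of degree `+1`, `d² = 0`, and
`D_τ = δ_τ d + d δ_τ`, one has
`Σ_k (−1)^k k tr((d/dτ D_τ^{(k)}) e^{−tD_τ^{(k)}}) = Σ_k (−1)^k tr(θ_τ^{(k)} (d/dt) e^{−tD_τ^{(k)}})`,
where `(k)` denotes the restriction to `V^k`. -/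
theorem inner_variation_supertrace_identity
    (V : ℕ → Type) [∀ k, NormedAddCommGroup (V k)] [∀ k, NormedSpace ℂ (V k)]
    [∀ k, FiniteDimensional ℂ (V k)]
    (n : ℕ) (hV : ∀ k, n < k → Subsingleton (V k))
    (d : ∀ k, V k →L[ℂ] V (k + 1))
    (hd2 : ∀ k, (d (k + 1)).comp (d k) = 0)
    (δ : ℝ → ∀ k, V (k + 1) →L[ℂ] V k)
    (hδ2 : ∀ s k, (δ s k).comp (δ s (k + 1)) = 0)
    (θ : ℝ → ∀ k, V k →L[ℂ] V k)
    (τ : ℝ)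
    -- inner variation: `δ_τ' = θ_τ δ_τ − δ_τ θ_τ` (with the appropriate degrees)
    (hδ' : ∀ k, HasDerivAt (fun s => δ s k)
      ((θ τ k).comp (δ τ k) - (δ τ k).comp (θ τ (k + 1))) τ)
    -- the characteristic operators `D_τ = δ_τ d + d δ_τ`, degree by degree
    (D : ℝ → ∀ k, V k →L[ℂ] V k)
    (hD0 : ∀ s, D s 0 = (δ s 0).comp (d 0))
    (hDsucc : ∀ s k, D s (k + 1) = (δ s (k + 1)).comp (d (k + 1)) + (d k).comp (δ s k))
    (D' : ∀ k, V k →L[ℂ] V k)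
    (hD' : ∀ k, HasDerivAt (fun s => D s k) (D' k) τ)
    (t : ℝ) :
    ∑ k ∈ Finset.range (n + 1),
        (-1 : ℂ) ^ k * (k : ℂ) *
          LinearMap.trace ℂ (V k)
            ((D' k).toLinearMap ∘ₗ (exp ((-(t : ℂ)) • D τ k)).toLinearMap)
      = ∑ k ∈ Finset.range (n + 1),
          (-1 : ℂ) ^ k *
            LinearMap.trace ℂ (V k)
              ((θ τ k).toLinearMap ∘ₗ
                (deriv (fun s : ℝ => exp ((-(s : ℂ)) • D τ k)) t).toLinearMap) := by
  have hdn : d n = 0 := haveI := hV (n + 1) n.lt_succ_self; Subsingleton.elim _ _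
  -- As a local instance `hV` sends instance search astray.
  clear hV
  have hD : ∀ s k, D s k = gradedLaplacian d (δ s) k := fun s k => by
    cases k
    exacts [hD0 s, hDsucc s _]
  simp only [hD] at hD' ⊢
  set δ' : ∀ k, V (k + 1) →L[ℂ] V k := fun k => θ τ k ∘L δ τ k - δ τ k ∘L θ τ (k + 1)
  have hD'succ : ∀ k, D' (k + 1) = δ' (k + 1) ∘L d (k + 1) + d k ∘L δ' k := fun k =>
    (hD' (k + 1)).unique (hasDerivAt_gradedLaplacian_succ d hδ' k)
  simp only [← ContinuousLinearMap.toLinearMap_comp]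
  rw [alternating_weighted_sum_eq_neg_alternating_sum n (f := fun k => LinearMap.trace ℂ (V k)
      (δ' k ∘L d k ∘L exp (-(t : ℂ) • gradedLaplacian d (δ τ) k)).toLinearMap)
    (fun k => by rw [hD'succ]; exact trace_comp_add_comp_exp_smul_gradedLaplacian d hd2 _ δ' k)
    (by simp [hdn])]
  exact neg_alternating_sum_sub_eq n
    (fun k => trace_commutator_comp_differential_comp_exp_smul_gradedLaplacian d (hδ2 τ) _ _ k)
    (trace_comp_deriv_exp_neg_smul _ _ t)
    (fun k => trace_comp_deriv_exp_neg_smul_gradedLaplacian_succ d _ k _ t) (by simp [hdn])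
end

section
/- For a differentiable family of matrices τ ↦ D_τ on a finite-dimensional vector space, d/dτ e^{−tD_τ} = −∫₀ᵗ e^{−(t−u)D_τ} (d/dτ D_τ) e^{−uD_τ} du (Duhamel's formula). -/
/-!
For any `A B`, the map `u ↦ exp (-(t - u) • A) * exp (-u • B)` runs from `exp (-t • A)` at `u = 0`
to `exp (-t • B)` at `u = t` and has derivative `exp (-(t - u) • A) * (A - B) * exp (-u • B)`, so
the fundamental theorem of calculus expresses `exp (-t • A) - exp (-t • B)` as an integral without
any commutation between `A` and `B`. With `A = D s`, `B = D τ`, the slope of `s ↦ exp (-t • D s)`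
at `τ` is that integral with `A - B` replaced by the difference quotient; writing the quotient as
`dslope D τ s`, the integral depends continuously on `s` at `τ`, and its value there is the claim.
-/

open NormedSpace

namespace NormedSpace

variable {𝔸 : Type*} [NormedRing 𝔸] [NormedAlgebra ℝ 𝔸] [CompleteSpace 𝔸]

theorem exp_continuous_of_real : Continuous (exp : 𝔸 → 𝔸) :=
  continuous_iff_continuousAt.2 fun x => (exp_analytic (𝕂 := ℝ) x).continuousAt

theorem exp_neg_smul_sub_exp_neg_smul (A B : 𝔸) (t : ℝ) :
    exp (-t • A) - exp (-t • B) =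
      -∫ u in (0 : ℝ)..t, exp (-(t - u) • A) * (A - B) * exp (-u • B) := by
  have hderiv : ∀ u ∈ Set.uIcc (0 : ℝ) t,
      HasDerivAt (fun u => exp (-(t - u) • A) * exp (-u • B))
        (exp (-(t - u) • A) * (A - B) * exp (-u • B)) u := by
    intro u _
    have hA : HasDerivAt (fun u : ℝ => exp (-(t - u) • A)) (exp (-(t - u) • A) * A) u := by
      have hc : HasDerivAt (fun u : ℝ => -(t - u)) 1 u := by
        simpa using (hasDerivAt_id' u).sub_const t
      simpa [Function.comp_def] using (hasDerivAt_exp_smul_const A _).scomp u hc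
    have hB : HasDerivAt (fun u : ℝ => exp (-u • B)) (-(B * exp (-u • B))) u := by
      simpa [Function.comp_def] using
        (hasDerivAt_exp_smul_const' B _).scomp u (hasDerivAt_neg u)
    refine (hA.mul hB).congr_deriv ?_
    rw [mul_neg, ← mul_assoc, ← sub_eq_add_neg, mul_sub, sub_mul]
  have hcont : Continuous fun u : ℝ => exp (-(t - u) • A) * (A - B) * exp (-u • B) := by
    have := exp_continuous_of_real (𝔸 := 𝔸)
    fun_prop
  rw [intervalIntegral.integral_eq_sub_of_hasDerivAt hderiv (hcont.intervalIntegrable 0 t)]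
  simp

theorem continuous_integral_exp_mul_mul_exp (C : 𝔸) (t : ℝ) :
    Continuous fun p : 𝔸 × 𝔸 => ∫ u in (0 : ℝ)..t, exp (-(t - u) • p.1) * p.2 * exp (-u • C) := by
  have := exp_continuous_of_real (𝔸 := 𝔸)
  exact intervalIntegral.continuous_parametric_intervalIntegral_of_continuous' (by fun_prop) _ _

theorem slope_exp_neg_smul (D : ℝ → 𝔸) (t τ s : ℝ) :
    slope (fun s => exp (-t • D s)) τ s =
      -∫ u in (0 : ℝ)..t, exp (-(t - u) • D s) * slope D τ s * exp (-u • D τ) := by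
  simp only [slope_def_module, exp_neg_smul_sub_exp_neg_smul, smul_neg,
    ← intervalIntegral.integral_smul, mul_smul_comm, smul_mul_assoc]

theorem hasDerivAt_exp_neg_smul {D : ℝ → 𝔸} {D'τ : 𝔸} {τ : ℝ} (hD : HasDerivAt D D'τ τ) (t : ℝ) :
    HasDerivAt (fun s => exp (-t • D s))
      (-∫ u in (0 : ℝ)..t, exp (-(t - u) • D τ) * D'τ * exp (-u • D τ)) τ := by
  set F : ℝ → 𝔸 := fun s =>
    -∫ u in (0 : ℝ)..t, exp (-(t - u) • D s) * dslope D τ s * exp (-u • D τ)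
  have hF : ContinuousAt F τ :=
    ((continuous_integral_exp_mul_mul_exp (D τ) t).continuousAt.comp
      (hD.continuousAt.prodMk (continuousAt_dslope_same.2 hD.differentiableAt))).neg
  have hFτ : F τ = -∫ u in (0 : ℝ)..t, exp (-(t - u) • D τ) * D'τ * exp (-u • D τ) := by
    simp only [F, dslope_same, hD.deriv]
  rw [hasDerivAt_iff_tendsto_slope, ← hFτ]
  refine (hF.tendsto.mono_left nhdsWithin_le_nhds).congr' ?_
  filter_upwards [self_mem_nhdsWithin] with s hs
  simp only [F, slope_exp_neg_smul, dslope_of_ne D hs]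

end NormedSpace

theorem duhamel_formula_general
    {V : Type*} [NormedAddCommGroup V] [NormedSpace ℂ V] [FiniteDimensional ℂ V]
    (D D' : ℝ → V →L[ℂ] V)
    (hD : ∀ τ, HasDerivAt D (D' τ) τ)
    (t τ : ℝ) :
    HasDerivAt (fun s => exp (-t • D s))
      (-∫ u in (0:ℝ)..t, exp (-(t - u) • D τ) * D' τ * exp (-u • D τ)) τ :=
  hasDerivAt_exp_neg_smul (hD τ) t

/-- Duhamel's formula: for a continuously differentiable family of operators `τ ↦ D_τ`
on a finite-dimensional space,
`d/dτ e^{−tD_τ} = −∫₀ᵗ e^{−(t−u)D_τ} (d/dτ D_τ) e^{−uD_τ} du`. -/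
theorem duhamel_formula
    {V : Type*} [NormedAddCommGroup V] [NormedSpace ℂ V] [FiniteDimensional ℂ V]
    (D D' : ℝ → V →L[ℂ] V)
    (hD : ∀ τ, HasDerivAt D (D' τ) τ)
    (hD' : Continuous D')
    (t τ : ℝ) :
    HasDerivAt (fun s => exp (-t • D s))
      (-∫ u in (0:ℝ)..t, exp (-(t - u) • D τ) * D' τ * exp (-u • D τ)) τ :=
  duhamel_formula_general D D' hD t τ
end
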